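/- Let Θ ⊆ ℝ^d be open, let {w_θ : θ ∈ Θ} ⊆ W(X,E) with w_θ(y|x) continuously differentiable in θ for each (x,y) ∈ E, and let {q_θ : θ ∈ Θ} be strictly positive probability distributions on X with q_θ(x) continuously differentiable in θ. For n ≥ 1 define the joint distribution q_θ^(n)(x^n) = q_θ(x_1) Π_{t=1}^{n−1} w_θ(x_{t+1}|x_t) on paths x^n = (x_1,…,x_n) with (x_t,x_{t+1}) ∈ E for all t, and let g_ij^(n)(θ) = Σ_{x^n} q_θ^(n)(x^n) (∂_i log q_θ^(n)(x^n))(∂_j log q_θ^(n)(x^n)). Then for every θ ∈ Θ and all i, j, (1/n) g_ij^(n)(θ) converges as n → ∞ to g_ij(θ) := Σ_{(x,y)∈E} p_{w_θ}(x) w_θ(y|x) (∂_i log w_θ(y|x))(∂_j log w_θ(y|x)). -/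

import Mathlib

open scoped BigOperators

/-- The directed graph `(X, E)` is strongly connected: any vertex can be reached
from any other by a path of length at least one along edges in `E`. -/
def StronglyConnected {X : Type*} (E : Finset (X × X)) : Prop :=
  ∀ x y : X, Relation.TransGen (fun a b => (a, b) ∈ E) x y

/-- `w` is a Markov kernel on `(X, E)` (an element of `W(X,E)`):
`w x y` denotes `w(y|x)`, is nonnegative, sums to one over `y`,
and is positive exactly on the edge set `E`. -/
def IsMarkovKernel {X : Type*} [Fintype X] (E : Finset (X × X)) (w : X → X → ℝ) : Prop :=
  (∀ x y, 0 ≤ w x y) ∧ (∀ x, ∑ y, w x y = 1) ∧ (∀ x y, (0 < w x y ↔ (x, y) ∈ E))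


/-- `p` is the (positive) stationary distribution of the Markov kernel `w`. -/
def IsStationaryDist {X : Type*} [Fintype X] (w : X → X → ℝ) (p : X → ℝ) : Prop :=
  (∀ x, 0 < p x) ∧ (∑ x, p x = 1) ∧ (∀ y, ∑ x, p x * w x y = p y)

/-- The partial derivative `∂f/∂θⁱ` of a function `f : ℝ^d → ℝ` at `θ`. -/
noncomputable def pd {d : ℕ} (f : (Fin d → ℝ) → ℝ) (i : Fin d) (θ : Fin d → ℝ) : ℝ :=
  fderiv ℝ f θ (Pi.single i 1)

/-!
Along a path the score `∂ₖ log q⁽ⁿ⁾` is additive: the score of the initial state plus one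
transition score `∂ₖ log w(x_{t+1}|x_t)` per step. A transition score has mean zero given the
current state, so all cross terms vanish in expectation and step `t` adds exactly
`Σ_x μ_t(x) F(x)` to the Fisher information, where `μ_t = q wᵗ` is the law of the `t`-th state
and `F(x) = Σ_y w(y|x) ∂_i log w(y|x) ∂_j log w(y|x)`. Hence `g⁽ⁿ⁾ / n` is `F` integrated
against the Cesàro average of the `μ_t`. These averages lie in the compact simplex and each of
their cluster points is stationary; strong connectivity makes the stationary distribution unique,
so they converge to `p`.
-/

open Filter Topology Matrix Finset

section Stationary

variable {X : Type*} [Fintype X] {M : Matrix X X ℝ}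

theorem eq_of_vecMul_eq_self {E : Finset (X × X)} (hconn : StronglyConnected E)
    (hM0 : ∀ x y, 0 ≤ M x y) (hME : ∀ x y, (x, y) ∈ E → 0 < M x y)
    {p v : X → ℝ} (hp0 : ∀ x, 0 < p x) (hpM : p ᵥ* M = p) (hvM : v ᵥ* M = v)
    (hsum : ∑ x, v x = ∑ x, p x) : v = p := by
  cases isEmpty_or_nonempty X
  · exact funext isEmptyElim
  -- with `c` the least ratio `v x / p x`, `v - c • p` is a nonnegative stationary vector
  -- with a zero, and stationarity propagates zeros backwards along edges
  obtain ⟨x₀, -, hx₀⟩ := exists_min_image univ (fun x => v x / p x) univ_nonempty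
  set c := v x₀ / p x₀
  set h := v - c • p with hh
  have h_nonneg : ∀ x, 0 ≤ h x := fun x => by
    simpa [hh] using (le_div_iff₀ (hp0 x)).1 (hx₀ x (mem_univ x))
  have h_stat : h ᵥ* M = h := by rw [hh, sub_vecMul, smul_vecMul, hvM, hpM]
  have h_back : ∀ x y, (x, y) ∈ E → h y = 0 → h x = 0 := fun x y hxy hy => by
    have hsum0 : ∑ z, h z * M z y = 0 := hy ▸ congrFun h_stat y
    have := (sum_eq_zero_iff_of_nonneg fun z _ => mul_nonneg (h_nonneg z) (hM0 z y)).1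
      hsum0 x (mem_univ x)
    exact (mul_eq_zero.1 this).resolve_right (hME x y hxy).ne'
  have h_zero : ∀ x, h x = 0 := fun x => by
    have hx₀ : h x₀ = 0 := by simp [hh, c, div_mul_cancel₀ _ (hp0 x₀).ne']
    induction hconn x x₀ using Relation.TransGen.head_induction_on with
    | single hxy => exact h_back _ _ hxy hx₀
    | head hxy _ ih => exact h_back _ _ hxy ih
  have hc : c = 1 := by
    have hsum_h : ∑ x, h x = (1 - c) * ∑ x, p x := by
      simp only [hh, Pi.sub_apply, Pi.smul_apply, smul_eq_mul, sum_sub_distrib, ← mul_sum, hsum]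
      ring
    have hp_pos : 0 < ∑ x, p x := sum_pos (fun x _ => hp0 x) univ_nonempty
    simp only [h_zero, sum_const_zero] at hsum_h
    nlinarith
  funext x
  simpa [hh, hc, sub_eq_zero] using h_zero x

variable [DecidableEq X]

theorem vecMul_mem_stdSimplex (hM : M ∈ rowStochastic ℝ X) {v : X → ℝ}
    (hv : v ∈ stdSimplex ℝ X) : v ᵥ* M ∈ stdSimplex ℝ X := by
  refine ⟨nonneg_vecMul_of_mem_rowStochastic hM hv.1, ?_⟩
  simpa [dotProduct] using vecMul_dotProduct_one_eq_one_rowStochastic hM (x := v)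
    (by simpa [dotProduct] using hv.2)

theorem tendsto_cesaro_vecMul_pow {E : Finset (X × X)} (hconn : StronglyConnected E)
    (hM : M ∈ rowStochastic ℝ X) (hME : ∀ x y, (x, y) ∈ E → 0 < M x y)
    {p q : X → ℝ} (hp : IsStationaryDist M p) (hq : q ∈ stdSimplex ℝ X) :
    Tendsto (fun n : ℕ => (n : ℝ)⁻¹ • ∑ t ∈ range n, q ᵥ* M ^ t) atTop (𝓝 p) := by
  set ν := fun n : ℕ => (n : ℝ)⁻¹ • ∑ t ∈ range n, q ᵥ* M ^ t
  have hpow : ∀ t, q ᵥ* M ^ t ∈ stdSimplex ℝ X := fun t =>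
    vecMul_mem_stdSimplex (pow_mem hM t) hq
  have hν : ∀ᶠ n in atTop, ν n ∈ stdSimplex ℝ X := by
    filter_upwards [eventually_ne_atTop 0] with n hn
    simp only [ν, smul_sum]
    exact (convex_stdSimplex ℝ X).sum_mem (fun _ _ => by positivity) (by simp [hn])
      fun t _ => hpow t
  have hdefect : Tendsto (fun n => ν n ᵥ* M - ν n) atTop (𝓝 0) := by
    have htelescope : ∀ n : ℕ, ν n ᵥ* M - ν n = (n : ℝ)⁻¹ • (q ᵥ* M ^ n - q) := fun n => by
      simp only [ν, smul_vecMul, sum_vecMul, vecMul_vecMul, ← pow_succ, ← smul_sub,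
        ← sum_sub_distrib]
      rw [sum_range_sub (fun t => q ᵥ* M ^ t), pow_zero, vecMul_one]
    simp only [htelescope]
    refine squeeze_zero_norm (a := fun n : ℕ => (n : ℝ)⁻¹ * 2) (fun n => ?_) ?_
    · rw [norm_smul, norm_inv, Real.norm_natCast]
      gcongr
      calc ‖q ᵥ* M ^ n - q‖ ≤ ‖q ᵥ* M ^ n‖ + ‖q‖ := norm_sub_le _ _
        _ ≤ 1 + 1 := add_le_add
            (mem_closedBall_zero_iff.1 (stdSimplex_subset_closedBall (hpow n)))
            (mem_closedBall_zero_iff.1 (stdSimplex_subset_closedBall hq))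
        _ = 2 := by norm_num
    · simpa using (tendsto_inv_atTop_zero.comp tendsto_natCast_atTop_atTop).mul_const (2 : ℝ)
  refine (isCompact_stdSimplex ℝ X).tendsto_nhds_of_unique_mapClusterPt hν fun v hv hcl => ?_
  have hvM : v ᵥ* M = v := by
    have hcl' : MapClusterPt (v ᵥ* M - v) atTop fun n => ν n ᵥ* M - ν n :=
      hcl.continuousAt_comp (f := fun u => u ᵥ* M - u)
        ((continuous_id.matrix_vecMul continuous_const).sub continuous_id).continuousAt
    exact sub_eq_zero.1 (eq_of_nhds_neBot (hcl'.clusterPt.mono hdefect))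
  obtain ⟨hp0, hp1, hpM⟩ := hp
  exact eq_of_vecMul_eq_self hconn (fun x y => hM.1 x y) hME hp0 (funext hpM) hvM
    (by rw [hv.2, hp1])

end Stationary

section Paths

variable {X : Type*}

def pathWeight (q : X → ℝ) (M : Matrix X X ℝ) (n : ℕ) (xs : Fin (n + 1) → X) : ℝ :=
  q (xs 0) * ∏ t : Fin n, M (xs t.castSucc) (xs t.succ)

def pathSum (a : X → ℝ) (L : X → X → ℝ) (n : ℕ) (xs : Fin (n + 1) → X) : ℝ :=
  a (xs 0) + ∑ t : Fin n, L (xs t.castSucc) (xs t.succ)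

variable {q a b : X → ℝ} {M : Matrix X X ℝ} {L K : X → X → ℝ}

theorem pathWeight_snoc (n : ℕ) (ys : Fin (n + 1) → X) (z : X) :
    pathWeight q M (n + 1) (Fin.snoc ys z) = pathWeight q M n ys * M (ys (Fin.last n)) z := by
  simp [pathWeight, Fin.prod_univ_castSucc, Fin.succ_castSucc, -Fin.castSucc_succ, mul_assoc]

theorem pathSum_snoc (n : ℕ) (ys : Fin (n + 1) → X) (z : X) :
    pathSum a L (n + 1) (Fin.snoc ys z) = pathSum a L n ys + L (ys (Fin.last n)) z := by
  simp [pathSum, Fin.sum_univ_castSucc, Fin.succ_castSucc, -Fin.castSucc_succ, add_assoc]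

variable [Fintype X]

theorem sum_pathWeight_succ_mul (n : ℕ) (g : (Fin (n + 2) → X) → ℝ) :
    ∑ xs, pathWeight q M (n + 1) xs * g xs
      = ∑ ys, pathWeight q M n ys * ∑ z, M (ys (Fin.last n)) z * g (Fin.snoc ys z) := by
  rw [← (Fin.snocEquiv fun _ => X).sum_comp, Fintype.sum_prod_type, sum_comm]
  simp [Fin.snocEquiv, pathWeight_snoc, mul_sum, mul_assoc]

variable [DecidableEq X]

theorem sum_pathWeight_mul_last (n : ℕ) (f : X → ℝ) :
    ∑ xs, pathWeight q M n xs * f (xs (Fin.last n)) = (q ᵥ* M ^ n) ⬝ᵥ f := by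
  induction n generalizing f with
  | zero =>
    rw [← (Equiv.funUnique (Fin 1) X).symm.sum_comp]
    simp [pathWeight, dotProduct]
  | succ n ih =>
    rw [sum_pathWeight_succ_mul]
    simp only [Fin.snoc_last]
    rw [pow_succ, ← vecMul_vecMul, ← dotProduct_mulVec, ← ih]
    rfl

theorem sum_pathWeight_mul_pathSum_mul_succ (hM : ∀ x, ∑ y, M x y = 1)
    (hL : ∀ x, ∑ y, M x y * L x y = 0) (hK : ∀ x, ∑ y, M x y * K x y = 0) (n : ℕ) :
    ∑ xs, pathWeight q M (n + 1) xs * (pathSum a L (n + 1) xs * pathSum b K (n + 1) xs)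
      = ∑ xs, pathWeight q M n xs * (pathSum a L n xs * pathSum b K n xs)
        + (q ᵥ* M ^ n) ⬝ᵥ fun x => ∑ y, M x y * (L x y * K x y) := by
  have hstep : ∀ x A B, ∑ z, M x z * ((A + L x z) * (B + K x z))
      = A * B + ∑ z, M x z * (L x z * K x z) := fun x A B => by
    calc _ = ∑ z, (A * B * M x z + A * (M x z * K x z) + B * (M x z * L x z)
          + M x z * (L x z * K x z)) := sum_congr rfl fun z _ => by ring
      _ = _ := by
        rw [sum_add_distrib, sum_add_distrib, sum_add_distrib, ← mul_sum, ← mul_sum, ← mul_sum,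
          hM, hK, hL]
        ring
  rw [sum_pathWeight_succ_mul, ← sum_pathWeight_mul_last, ← sum_add_distrib]
  refine sum_congr rfl fun ys _ => ?_
  simp only [pathSum_snoc, hstep]
  ring

theorem tendsto_sum_pathWeight_mul_pathSum_mul_div {E : Finset (X × X)}
    (hconn : StronglyConnected E) (hM : M ∈ rowStochastic ℝ X)
    (hME : ∀ x y, (x, y) ∈ E → 0 < M x y) {p : X → ℝ} (hp : IsStationaryDist M p)
    (hq : q ∈ stdSimplex ℝ X) (hL : ∀ x, ∑ y, M x y * L x y = 0)
    (hK : ∀ x, ∑ y, M x y * K x y = 0) :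
    Tendsto (fun n : ℕ =>
        (∑ xs, pathWeight q M n xs * (pathSum a L n xs * pathSum b K n xs)) / (n + 1))
      atTop (𝓝 (p ⬝ᵥ fun x => ∑ y, M x y * (L x y * K x y))) := by
  set F : X → ℝ := fun x => ∑ y, M x y * (L x y * K x y)
  set G := fun n => ∑ xs, pathWeight q M n xs * (pathSum a L n xs * pathSum b K n xs)
  have hGn : ∀ n, G n = G 0 + (∑ t ∈ range n, q ᵥ* M ^ t) ⬝ᵥ F := fun n => by
    have hstep : ∀ t, G (t + 1) - G t = (q ᵥ* M ^ t) ⬝ᵥ F := fun t => by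
      simp only [G, sum_pathWeight_mul_pathSum_mul_succ (sum_row_of_mem_rowStochastic hM) hL hK,
        add_sub_cancel_left, F]
    rw [sum_dotProduct, ← sum_congr rfl fun t _ => hstep t, sum_range_sub]
    ring
  have hG : ∀ n : ℕ, G 0 / (n + 1)
      + (n / (n + 1)) * (((n : ℝ)⁻¹ • ∑ t ∈ range n, q ᵥ* M ^ t) ⬝ᵥ F) = G n / (n + 1) := by
    intro n
    rcases eq_or_ne n 0 with rfl | hn
    · simp
    · rw [hGn n, smul_dotProduct, smul_eq_mul]
      field_simp
  have hlim : Tendsto (fun n : ℕ => G 0 / (n + 1)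
      + (n / (n + 1)) * (((n : ℝ)⁻¹ • ∑ t ∈ range n, q ᵥ* M ^ t) ⬝ᵥ F))
      atTop (𝓝 (0 + 1 * (p ⬝ᵥ F))) :=
    (tendsto_const_nhds.div_atTop (tendsto_natCast_atTop_atTop.atTop_add tendsto_const_nhds)).add
      ((tendsto_natCast_div_add_atTop 1).mul
        (((continuous_id.dotProduct continuous_const).tendsto p).comp
          (tendsto_cesaro_vecMul_pow hconn hM hME hp hq)))
  rw [zero_add, one_mul] at hlim
  exact hlim.congr hG

end Paths

section Score

variable {d : ℕ} {θ : Fin d → ℝ} {k : Fin d}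

theorem pd_log {f : (Fin d → ℝ) → ℝ} (hf : DifferentiableAt ℝ f θ) (hf0 : f θ ≠ 0) :
    pd (fun θ' => Real.log (f θ')) k θ = (f θ)⁻¹ * pd f k θ := by
  simp [pd, (hf.hasFDerivAt.log hf0).fderiv]

theorem pd_log_mul_prod {ι : Type*} {s : Finset ι} {f : (Fin d → ℝ) → ℝ}
    {g : ι → (Fin d → ℝ) → ℝ} (hf : DifferentiableAt ℝ f θ)
    (hg : ∀ a ∈ s, DifferentiableAt ℝ (g a) θ) (hf0 : f θ ≠ 0) (hg0 : ∀ a ∈ s, g a θ ≠ 0) :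
    pd (fun θ' => Real.log (f θ' * ∏ a ∈ s, g a θ')) k θ
      = pd (fun θ' => Real.log (f θ')) k θ + ∑ a ∈ s, pd (fun θ' => Real.log (g a θ')) k θ := by
  have hsplit : (fun θ' => Real.log (f θ' * ∏ a ∈ s, g a θ'))
      =ᶠ[𝓝 θ] fun θ' => Real.log (f θ') + ∑ a ∈ s, Real.log (g a θ') := by
    filter_upwards [hf.continuousAt.eventually_ne hf0,
      (eventually_all_finset s).2 fun a ha => (hg a ha).continuousAt.eventually_ne (hg0 a ha)]
      with θ' hf0' hg0'
    rw [Real.log_mul hf0' (prod_ne_zero_iff.2 hg0'), Real.log_prod hg0']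
  have hlogg : ∀ a ∈ s, DifferentiableAt ℝ (fun θ' => Real.log (g a θ')) θ := fun a ha =>
    (hg a ha).log (hg0 a ha)
  simp [pd, hsplit.fderiv_eq, fderiv_fun_add (hf.log hf0) (DifferentiableAt.fun_sum hlogg),
    fderiv_fun_sum hlogg]

theorem sum_mul_pd_log_eq_zero {ι : Type*} [Fintype ι] {f : ι → (Fin d → ℝ) → ℝ}
    (hf : ∀ a, DifferentiableAt ℝ (f a) θ) (hf0 : ∀ᶠ θ' in 𝓝 θ, ∀ a, 0 ≤ f a θ')
    (hf1 : ∀ᶠ θ' in 𝓝 θ, ∑ a, f a θ' = 1) :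
    ∑ a, f a θ * pd (fun θ' => Real.log (f a θ')) k θ = 0 := by
  have hterm : ∀ a, f a θ * pd (fun θ' => Real.log (f a θ')) k θ = pd (f a) k θ := fun a => by
    by_cases h0 : f a θ = 0
    · have hmin : IsLocalMin (f a) θ := by
        filter_upwards [hf0] with θ' h
        exact h0 ▸ h a
      simp [pd, h0, hmin.fderiv_eq_zero]
    · rw [pd_log (hf a) h0, mul_inv_cancel_left₀ h0]
  calc ∑ a, f a θ * pd (fun θ' => Real.log (f a θ')) k θ = ∑ a, pd (f a) k θ :=
        sum_congr rfl fun a _ => hterm a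
    _ = pd (fun θ' => ∑ a, f a θ') k θ := by
        simp [pd, fderiv_fun_sum fun a _ => hf a]
    _ = 0 := by
        have hconst : (fun θ' => ∑ a, f a θ') =ᶠ[𝓝 θ] fun _ => 1 := hf1
        simp [pd, hconst.fderiv_eq]

end Score

section MarkovFamily

variable {X : Type*} [Fintype X] {E : Finset (X × X)} {d : ℕ} {θ : Fin d → ℝ}
  {w : (Fin d → ℝ) → X → X → ℝ}

theorem sum_mul_eq_dotProduct_of_eq_zero {M : Matrix X X ℝ} (hM : ∀ x y, (x, y) ∉ E → M x y = 0)
    (p : X → ℝ) (L K : X → X → ℝ) :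
    ∑ e ∈ E, p e.1 * M e.1 e.2 * L e.1 e.2 * K e.1 e.2
      = p ⬝ᵥ fun x => ∑ y, M x y * (L x y * K x y) := by
  rw [sum_subset (subset_univ E) fun e _ he => by simp [hM e.1 e.2 he], ← univ_product_univ,
    sum_product, dotProduct]
  simp only [mul_sum, mul_assoc]

theorem IsMarkovKernel.eq_zero_of_notMem {M : X → X → ℝ} (hM : IsMarkovKernel E M) {x y : X}
    (hxy : (x, y) ∉ E) : M x y = 0 :=
  ((hM.1 x y).eq_of_not_lt fun h => hxy ((hM.2.2 x y).1 h)).symm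

theorem differentiableAt_of_isMarkovKernel {Θ : Set (Fin d → ℝ)} (hΘ : Θ ∈ 𝓝 θ)
    (hker : ∀ θ ∈ Θ, IsMarkovKernel E (w θ))
    (hwC : ∀ x y, (x, y) ∈ E → ContDiffOn ℝ 1 (fun θ => w θ x y) Θ) (x y : X) :
    DifferentiableAt ℝ (fun θ' => w θ' x y) θ := by
  by_cases hxy : (x, y) ∈ E
  · exact ((hwC x y hxy).differentiableOn one_ne_zero).differentiableAt hΘ
  · exact (differentiableAt_const 0).congr_of_eventuallyEq
      (eventually_of_mem hΘ fun θ' hθ' => (hker θ' hθ').eq_zero_of_notMem hxy)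

theorem ite_mul_pd_log_eq_pathWeight_mul_pathSum [DecidableEq X] {q : (Fin d → ℝ) → X → ℝ}
    (hw : IsMarkovKernel E (w θ)) (hwd : ∀ x y, DifferentiableAt ℝ (fun θ' => w θ' x y) θ)
    (hq : ∀ x, q θ x ≠ 0) (hqd : ∀ x, DifferentiableAt ℝ (fun θ' => q θ' x) θ) (i j : Fin d)
    (n : ℕ) (xs : Fin (n + 1) → X) :
    (if ∀ t : Fin n, (xs t.castSucc, xs t.succ) ∈ E then
        (q θ (xs 0) * ∏ t : Fin n, w θ (xs t.castSucc) (xs t.succ)) *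
          pd (fun θ' => Real.log
            (q θ' (xs 0) * ∏ t : Fin n, w θ' (xs t.castSucc) (xs t.succ))) i θ *
          pd (fun θ' => Real.log
            (q θ' (xs 0) * ∏ t : Fin n, w θ' (xs t.castSucc) (xs t.succ))) j θ
      else 0)
      = pathWeight (q θ) (w θ) n xs *
          (pathSum (fun x => pd (fun θ' => Real.log (q θ' x)) i θ)
              (fun x y => pd (fun θ' => Real.log (w θ' x y)) i θ) n xs *
            pathSum (fun x => pd (fun θ' => Real.log (q θ' x)) j θ)
              (fun x y => pd (fun θ' => Real.log (w θ' x y)) j θ) n xs) := by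
  split_ifs with hpath
  · have hsplit := fun k => pd_log_mul_prod (k := k) (s := univ) (hqd (xs 0))
      (fun t _ => hwd _ _) (hq _) fun t _ => ((hw.2.2 _ _).2 (hpath t)).ne'
    rw [hsplit, hsplit, mul_assoc]
    rfl
  · obtain ⟨t, ht⟩ := not_forall.1 hpath
    have hzero : pathWeight (q θ) (w θ) n xs = 0 :=
      mul_eq_zero_of_right _ (prod_eq_zero (mem_univ t) (hw.eq_zero_of_notMem ht))
    rw [hzero, zero_mul]

end MarkovFamily

theorem fisher_information_rate_limit_general
    {X : Type*} [Fintype X] [DecidableEq X] {d : ℕ}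
    (E : Finset (X × X)) (hconn : StronglyConnected E)
    (Θ : Set (Fin d → ℝ)) (hΘ : IsOpen Θ)
    (w : (Fin d → ℝ) → X → X → ℝ) (hker : ∀ θ ∈ Θ, IsMarkovKernel E (w θ))
    (hwC : ∀ x y, (x, y) ∈ E → ContDiffOn ℝ 1 (fun θ => w θ x y) Θ)
    (q : (Fin d → ℝ) → X → ℝ)
    (hq : ∀ θ ∈ Θ, (∀ x, 0 < q θ x) ∧ ∑ x, q θ x = 1)
    (hqC : ∀ x, ContDiffOn ℝ 1 (fun θ => q θ x) Θ)
    (θ : Fin d → ℝ) (hθ : θ ∈ Θ)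
    (p : X → ℝ) (hp : IsStationaryDist (w θ) p)
    (i j : Fin d) :
    Filter.Tendsto (fun n : ℕ =>
      (∑ xs : Fin (n + 1) → X,
        if ∀ t : Fin n, (xs t.castSucc, xs t.succ) ∈ E then
          (q θ (xs 0) * ∏ t : Fin n, w θ (xs t.castSucc) (xs t.succ)) *
            pd (fun θ' => Real.log
              (q θ' (xs 0) * ∏ t : Fin n, w θ' (xs t.castSucc) (xs t.succ))) i θ *
            pd (fun θ' => Real.log
              (q θ' (xs 0) * ∏ t : Fin n, w θ' (xs t.castSucc) (xs t.succ))) j θ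
        else 0) / (n + 1 : ℝ))
      Filter.atTop
      (nhds (∑ e ∈ E, p e.1 * w θ e.1 e.2 *
        pd (fun θ' => Real.log (w θ' e.1 e.2)) i θ *
        pd (fun θ' => Real.log (w θ' e.1 e.2)) j θ)) := by
  have hΘθ : Θ ∈ 𝓝 θ := hΘ.mem_nhds hθ
  have hw := hker θ hθ
  have hwd := differentiableAt_of_isMarkovKernel hΘθ hker hwC
  have hqd : ∀ x, DifferentiableAt ℝ (fun θ' => q θ' x) θ := fun x =>
    ((hqC x).differentiableOn one_ne_zero).differentiableAt hΘθ
  have hscore : ∀ k x, ∑ y, w θ x y * pd (fun θ' => Real.log (w θ' x y)) k θ = 0 :=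
    fun k x => sum_mul_pd_log_eq_zero (hwd x)
      (eventually_of_mem hΘθ fun θ' hθ' y => (hker θ' hθ').1 x y)
      (eventually_of_mem hΘθ fun θ' hθ' => (hker θ' hθ').2.1 x)
  rw [sum_mul_eq_dotProduct_of_eq_zero (fun x y => hw.eq_zero_of_notMem) p
    (fun x y => pd (fun θ' => Real.log (w θ' x y)) i θ)
    (fun x y => pd (fun θ' => Real.log (w θ' x y)) j θ)]
  simp only [ite_mul_pd_log_eq_pathWeight_mul_pathSum hw hwd (fun x => ((hq θ hθ).1 x).ne') hqd]
  exact tendsto_sum_pathWeight_mul_pathSum_mul_div hconn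
    (mem_rowStochastic_iff_sum.2 ⟨hw.1, hw.2.1⟩) (fun x y => (hw.2.2 x y).2) hp
    ⟨fun x => ((hq θ hθ).1 x).le, (hq θ hθ).2⟩ (hscore i) (hscore j)

/-- Fisher information rate. Let `{w_θ : θ ∈ Θ} ⊆ W(X,E)` with
`w_θ(y|x)` continuously differentiable in `θ` on the open set `Θ`, and let `q_θ` be
strictly positive initial distributions, continuously differentiable in `θ`.  With
`q_θ⁽ⁿ⁾(x₁,…,xₙ) = q_θ(x₁) Π_t w_θ(x_{t+1}|x_t)` (a path with `n+1` points is
indexed by `Fin (n+1) → X`) and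
`g_ij⁽ⁿ⁾(θ) = Σ_{paths} q_θ⁽ⁿ⁾ (∂_i log q_θ⁽ⁿ⁾)(∂_j log q_θ⁽ⁿ⁾)`,
the normalized Fisher informations `(1/n) g_ij⁽ⁿ⁾(θ)` converge to
`g_ij(θ) = Σ_{(x,y)∈E} p_{w_θ}(x) w_θ(y|x)(∂_i log w_θ(y|x))(∂_j log w_θ(y|x))`. -/
theorem fisher_information_rate_limit
    {X : Type*} [Fintype X] [DecidableEq X] {d : ℕ}
    (hX : 2 ≤ Fintype.card X)
    (E : Finset (X × X)) (hconn : StronglyConnected E)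
    (Θ : Set (Fin d → ℝ)) (hΘ : IsOpen Θ)
    (w : (Fin d → ℝ) → X → X → ℝ) (hker : ∀ θ ∈ Θ, IsMarkovKernel E (w θ))
    (hwC : ∀ x y, (x, y) ∈ E → ContDiffOn ℝ 1 (fun θ => w θ x y) Θ)
    (q : (Fin d → ℝ) → X → ℝ)
    (hq : ∀ θ ∈ Θ, (∀ x, 0 < q θ x) ∧ ∑ x, q θ x = 1)
    (hqC : ∀ x, ContDiffOn ℝ 1 (fun θ => q θ x) Θ)
    (θ : Fin d → ℝ) (hθ : θ ∈ Θ)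
    (p : X → ℝ) (hp : IsStationaryDist (w θ) p)
    (i j : Fin d) :
    Filter.Tendsto (fun n : ℕ =>
      (∑ xs : Fin (n + 1) → X,
        if ∀ t : Fin n, (xs t.castSucc, xs t.succ) ∈ E then
          (q θ (xs 0) * ∏ t : Fin n, w θ (xs t.castSucc) (xs t.succ)) *
            pd (fun θ' => Real.log
              (q θ' (xs 0) * ∏ t : Fin n, w θ' (xs t.castSucc) (xs t.succ))) i θ *
            pd (fun θ' => Real.log
              (q θ' (xs 0) * ∏ t : Fin n, w θ' (xs t.castSucc) (xs t.succ))) j θ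
        else 0) / (n + 1 : ℝ))
      Filter.atTop
      (nhds (∑ e ∈ E, p e.1 * w θ e.1 e.2 *
        pd (fun θ' => Real.log (w θ' e.1 e.2)) i θ *
        pd (fun θ' => Real.log (w θ' e.1 e.2)) j θ)) :=
  fisher_information_rate_limit_general E hconn Θ hΘ w hker hwC q hq hqC θ hθ p hp i j
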